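/- arXiv:1801.01073 — 4 statements merged into one kernel-verified Lean document; each statement's English description precedes it below -/
import Mathlib

section
/- In the abstract game G^M_w, the initial state s₀ belongs to Eve's winning region if and only if w ∈ L(M), i.e., iff the computation of M on w reaches an accepting configuration. -/
/-- A reachability game: states `V`, Eve's states, transition relation, target set. -/
structure RGame (V : Type) where
  eve : Set V
  trans : V → V → Prop
  target : Set V

open Classical in
/-- The transfinite attractor stages: `W 0 = target`; for `o > 0`, a state not in
`W_{<o}` is added if it is Eve's with a transition into `W_{<o}`, or Adam's with a
nonempty successor set contained in `W_{<o}`. -/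
noncomputable def RGame.W {V : Type} (g : RGame V) (o : Ordinal.{0}) : Set V :=
  if o = 0 then g.target
  else
    let Wlt : Set V := ⋃ o' : {x : Ordinal.{0} // x < o}, g.W o'.1
    {s | s ∉ Wlt ∧
      ((s ∈ g.eve ∧ ∃ t, g.trans s t ∧ t ∈ Wlt) ∨
       (s ∉ g.eve ∧ (∃ t, g.trans s t) ∧ ∀ t, g.trans s t → t ∈ Wlt))}
termination_by o
decreasing_by exact o'.2

/-- Eve's winning region: the union of all attractor stages. -/
noncomputable def RGame.WinE {V : Type} (g : RGame V) : Set V := ⋃ o : Ordinal.{0}, g.W o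
/-- A deterministic Turing machine; the direction `Bool` encodes `+1` (`true`) or `-1` (`false`). -/
structure TM where
  Q : Type
  Γ : Type
  q0 : Q
  qacc : Q
  qrej : Q
  blank : Γ
  δ : Q → Γ → Q × Γ × Bool

/-- The extended tape alphabet Δ = Γ ∪ (Q × Γ). -/
def TM.Sym (M : TM) : Type := M.Γ ⊕ (M.Q × M.Γ)

def TM.isFinalState (M : TM) (q : M.Q) : Prop := q = M.qacc ∨ q = M.qrej

/-- The local one-step relation ⊢ ⊆ Δ³ × Δ of the tableau construction;
it is undefined on triples whose head symbol carries a final state. -/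
inductive TM.Yields (M : TM) : M.Sym × M.Sym × M.Sym → M.Sym → Prop
  | headLeftR {q x y z q' x'} (hq : ¬ M.isFinalState q) (h : M.δ q x = (q', x', true)) :
      M.Yields (Sum.inr (q, x), Sum.inl y, Sum.inl z) (Sum.inr (q', y))
  | headLeftL {q x y z q' x'} (hq : ¬ M.isFinalState q) (h : M.δ q x = (q', x', false)) :
      M.Yields (Sum.inr (q, x), Sum.inl y, Sum.inl z) (Sum.inl y)
  | headMid {x q y z q' y' d} (hq : ¬ M.isFinalState q) (h : M.δ q y = (q', y', d)) :
      M.Yields (Sum.inl x, Sum.inr (q, y), Sum.inl z) (Sum.inl y')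
  | headRightL {x y q z q' z'} (hq : ¬ M.isFinalState q) (h : M.δ q z = (q', z', false)) :
      M.Yields (Sum.inl x, Sum.inl y, Sum.inr (q, z)) (Sum.inr (q', y))
  | headRightR {x y q z q' z'} (hq : ¬ M.isFinalState q) (h : M.δ q z = (q', z', true)) :
      M.Yields (Sum.inl x, Sum.inl y, Sum.inr (q, z)) (Sum.inl y)
  | plain {x y z} : M.Yields (Sum.inl x, Sum.inl y, Sum.inl z) (Sum.inl y)

/-- `C : ℤ → Δ` is a configuration: finitely many non-blanks and exactly one head symbol. -/
def TM.IsConfig (M : TM) (C : ℤ → M.Sym) : Prop :=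
  {j : ℤ | C j ≠ Sum.inl M.blank}.Finite ∧ ∃! j : ℤ, ∃ p : M.Q × M.Γ, C j = Sum.inr p

/-- A configuration is final if its head symbol carries the accepting or rejecting state. -/
def TM.IsFinalConfig (M : TM) (C : ℤ → M.Sym) : Prop :=
  ∃ (j : ℤ) (q : M.Q) (x : M.Γ), C j = Sum.inr (q, x) ∧ M.isFinalState q

/-- The successor relation on configurations: `C ⊢ C'` iff locally everywhere. -/
def TM.ConfigStep (M : TM) (C C' : ℤ → M.Sym) : Prop :=
  ∀ j : ℤ, M.Yields (C (j - 1), C j, C (j + 1)) (C' j)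
/-- The initial configuration `C₀^w` for input word `w`. -/
noncomputable def TM.initConfig (M : TM) (w : List M.Γ) : ℤ → M.Sym := fun j =>
  if j = 0 then Sum.inr (M.q0, w.headD M.blank)
  else if 0 < j ∧ j < (w.length : ℤ) then Sum.inl (w.getD j.toNat M.blank)
  else Sum.inl M.blank

open Classical in
/-- The computation of `M` on `w` at the level of whole configurations:
`none` stands for ⊥ (the computation has already halted). -/
noncomputable def TM.compC (M : TM) (w : List M.Γ) : ℕ → Option (ℤ → M.Sym)
  | 0 => some (M.initConfig w)
  | n + 1 => (M.compC w n).bind fun C =>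
      if M.IsFinalConfig C then none
      else if h : ∃ C', M.ConfigStep C C' then some h.choose else none

/-- `C^w_i(j)`, with `none` standing for ⊥. -/
noncomputable def TM.comp (M : TM) (w : List M.Γ) (i : ℕ) (j : ℤ) : Option M.Sym :=
  (M.compC w i).map (fun C => C j)

/-- `w ∈ L(M)`: the computation reaches an accepting configuration. -/
def TM.Accepts (M : TM) (w : List M.Γ) : Prop :=
  ∃ (i : ℕ) (C : ℤ → M.Sym) (j : ℤ) (x : M.Γ),
    M.compC w i = some C ∧ C j = Sum.inr (M.qacc, x)

/-- States of the abstract game `G^M_w`. -/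
inductive GSt (M : TM) where
  | s0 : GSt M
  | sF : GSt M
  | sym (β : M.Sym) (i : ℕ) (j : ℤ) : GSt M
  | tri (t : M.Sym × M.Sym × M.Sym) (i : ℕ) (j : ℤ) : GSt M

/-- Transitions of the abstract game `G^M_w`. -/
inductive GTr (M : TM) (w : List M.Γ) : GSt M → GSt M → Prop
  | start (x : M.Γ) (i : ℕ) (j : ℤ) :
      GTr M w GSt.s0 (GSt.sym (Sum.inr (M.qacc, x)) i j)
  | expand {β t} (i : ℕ) (j : ℤ) (h : M.Yields t β) :
      GTr M w (GSt.sym β (i + 1) j) (GSt.tri t i j)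
  | finish {β} (j : ℤ) (h : β = M.initConfig w j) :
      GTr M w (GSt.sym β 0 j) GSt.sF
  | pick1 {t i j} : GTr M w (GSt.tri t i j) (GSt.sym t.1 i (j - 1))
  | pick2 {t i j} : GTr M w (GSt.tri t i j) (GSt.sym t.2.1 i j)
  | pick3 {t i j} : GTr M w (GSt.tri t i j) (GSt.sym t.2.2 i (j + 1))

/-- The abstract reachability game `G^M_w`: Eve owns `s₀`, `s_F` and the
symbol states; Adam owns the triple states; target `{s_F}`. -/
def Gm (M : TM) (w : List M.Γ) : RGame (GSt M) where
  eve := {s | match s with | GSt.tri _ _ _ => False | _ => True}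
  trans := GTr M w
  target := {GSt.sF}

/-!
Eve's winning strategies from `(β, i, j)` are certificates that `C^w_i(j) = β`: Adam may
challenge any of the three cells that `⊢` reads, and since `⊢` is deterministic only the
true cell contents survive down to row `0`; conversely the true computation is a winning
strategy. The one subtlety is that the computation may have halted before row `i`. A
certified head symbol at row `i + 1` is produced from a non-final head symbol certified at
row `i`, so by induction the computation is still running at every row that carries a
certified head, in particular at the row where Eve claims `(q₊, x)`.
-/

namespace RGame
variable {V : Type} (g : RGame V)

inductive Win : V → Prop
  | base {s} : s ∈ g.target → Win s
  | eve {s t} : s ∈ g.eve → g.trans s t → Win t → Win s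
  | adam {s} : s ∉ g.eve → (∃ t, g.trans s t) → (∀ t, g.trans s t → Win t) → Win s

def Wlt (o : Ordinal.{0}) : Set V := ⋃ o' : {x : Ordinal.{0} // x < o}, g.W o'.1

lemma mem_Wlt {o : Ordinal.{0}} {s : V} : s ∈ g.Wlt o ↔ ∃ o' < o, s ∈ g.W o' := by
  simp [Wlt]

lemma W_eq (o : Ordinal.{0}) :
    g.W o = if o = 0 then g.target else
      {s | s ∉ g.Wlt o ∧ ((s ∈ g.eve ∧ ∃ t, g.trans s t ∧ t ∈ g.Wlt o) ∨
        (s ∉ g.eve ∧ (∃ t, g.trans s t) ∧ ∀ t, g.trans s t → t ∈ g.Wlt o))} := by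
  rw [RGame.W]
  rfl

lemma win_of_mem_W {o : Ordinal.{0}} {s : V} (hs : s ∈ g.W o) : g.Win s := by
  induction o using WellFoundedLT.induction generalizing s with
  | _ o ih =>
    have hWlt : ∀ {t}, t ∈ g.Wlt o → g.Win t := fun ht =>
      let ⟨o', ho', ht⟩ := g.mem_Wlt.1 ht
      ih o' ho' ht
    rw [W_eq] at hs
    split_ifs at hs
    · exact .base hs
    · obtain ⟨-, ⟨he, t, ht, htW⟩ | ⟨hne, hex, hall⟩⟩ := hs
      · exact .eve he ht (hWlt htW)
      · exact .adam hne hex fun t ht => hWlt (hall t ht)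

lemma mem_winE_of_mem_Wlt {o : Ordinal.{0}} {s : V} (hs : s ∈ g.Wlt o) : s ∈ g.WinE :=
  let ⟨o', _, hs⟩ := g.mem_Wlt.1 hs
  Set.mem_iUnion.2 ⟨o', hs⟩

/-- Stage `o` only adds states outside `W_{<o}`; those inside are winning already. -/
lemma mem_winE_of_attr {o : Ordinal.{0}} (ho : o ≠ 0) {s : V}
    (h : (s ∈ g.eve ∧ ∃ t, g.trans s t ∧ t ∈ g.Wlt o) ∨
      (s ∉ g.eve ∧ (∃ t, g.trans s t) ∧ ∀ t, g.trans s t → t ∈ g.Wlt o)) :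
    s ∈ g.WinE := by
  by_cases hs : s ∈ g.Wlt o
  · exact g.mem_winE_of_mem_Wlt hs
  · refine Set.mem_iUnion.2 ⟨o, ?_⟩
    rw [W_eq, if_neg ho]
    exact ⟨hs, h⟩

lemma mem_winE_of_win {s : V} (h : g.Win s) : s ∈ g.WinE := by
  induction h with
  | base h => exact Set.mem_iUnion.2 ⟨0, by rwa [W_eq, if_pos rfl]⟩
  | @eve s t he ht _ ih =>
    obtain ⟨o, ho⟩ := Set.mem_iUnion.1 ih
    exact g.mem_winE_of_attr (add_pos_of_right zero_lt_one o).ne'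
      (.inl ⟨he, t, ht, g.mem_Wlt.2 ⟨o, lt_add_one o, ho⟩⟩)
  | @adam s hne hex _ ih =>
    choose f hf using fun t : {t // g.trans s t} => Set.mem_iUnion.1 (ih t.1 t.2)
    have hlt (t) : f t < (⨆ t, f t) + 1 :=
      Order.lt_add_one_iff.2 (le_ciSup Ordinal.bddAbove_of_small t)
    exact g.mem_winE_of_attr (add_pos_of_right zero_lt_one _).ne'
      (.inr ⟨hne, hex, fun t ht => g.mem_Wlt.2 ⟨_, hlt ⟨t, ht⟩, hf ⟨t, ht⟩⟩⟩)

lemma mem_winE_iff {s : V} : s ∈ g.WinE ↔ g.Win s :=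
  ⟨fun h => let ⟨_, h⟩ := Set.mem_iUnion.1 h; g.win_of_mem_W h, g.mem_winE_of_win⟩

end RGame

namespace TM
variable {M : TM}

lemma Yields.unique {t : M.Sym × M.Sym × M.Sym} {β β' : M.Sym}
    (h : M.Yields t β) (h' : M.Yields t β') : β = β' := by
  cases h <;> cases h' <;> grind

lemma ConfigStep.unique {C C₁ C₂ : ℤ → M.Sym} (h₁ : M.ConfigStep C C₁)
    (h₂ : M.ConfigStep C C₂) : C₁ = C₂ :=
  funext fun j => (h₁ j).unique (h₂ j)

lemma Yields.exists_head_of_inr {a b c : M.Sym} {r : M.Q × M.Γ}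
    (h : M.Yields (a, b, c) (Sum.inr r)) :
    ∃ q x, ¬ M.isFinalState q ∧ (a = Sum.inr (q, x) ∨ c = Sum.inr (q, x)) := by
  cases h with
  | headLeftR hq _ => exact ⟨_, _, hq, .inl rfl⟩
  | headRightL hq _ => exact ⟨_, _, hq, .inr rfl⟩

lemma compC_succ_eq_some_iff {w : List M.Γ} {i : ℕ} {C' : ℤ → M.Sym} :
    M.compC w (i + 1) = some C' ↔
      ∃ C, M.compC w i = some C ∧ ¬ M.IsFinalConfig C ∧ M.ConfigStep C C' := by
  rw [compC, Option.bind_eq_some_iff]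
  constructor
  · rintro ⟨C, hC, h⟩
    split_ifs at h with hfin hex
    cases h
    exact ⟨C, hC, hfin, hex.choose_spec⟩
  · rintro ⟨C, hC, hfin, hs⟩
    refine ⟨C, hC, ?_⟩
    rw [if_neg hfin, dif_pos ⟨C', hs⟩, ConfigStep.unique (Exists.choose_spec _) hs]

def UniqueHead (C : ℤ → M.Sym) (p : ℤ) (q : M.Q) (x : M.Γ) : Prop :=
  C p = Sum.inr (q, x) ∧ ∀ j, j ≠ p → ∃ y, C j = Sum.inl y

lemma UniqueHead.eq_of_inr {C : ℤ → M.Sym} {p q x j r} (hC : UniqueHead C p q x)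
    (hj : C j = Sum.inr r) : j = p := by
  by_contra hjp
  obtain ⟨y, hy⟩ := hC.2 j hjp
  simp [hy] at hj

lemma UniqueHead.not_isFinalConfig {C : ℤ → M.Sym} {p q x} (hC : UniqueHead C p q x)
    (hq : ¬ M.isFinalState q) : ¬ M.IsFinalConfig C := by
  rintro ⟨j, q', x', hj, hq'⟩
  obtain rfl := hC.eq_of_inr hj
  obtain ⟨rfl, -⟩ := Prod.mk.inj (Sum.inr.inj (hC.1.symm.trans hj))
  exact hq hq'

lemma uniqueHead_initConfig (w : List M.Γ) :
    UniqueHead (M.initConfig w) 0 M.q0 (w.headD M.blank) := by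
  refine ⟨rfl, fun j hj => ?_⟩
  by_cases h : 0 < j ∧ j < (w.length : ℤ)
  · exact ⟨_, (if_neg hj).trans (if_pos h)⟩
  · exact ⟨_, (if_neg hj).trans (if_neg h)⟩

def tapeLetter : M.Sym → M.Γ := Sum.elim id Prod.snd

def movedHead (p : ℤ) (d : Bool) : ℤ := if d then p + 1 else p - 1

lemma movedHead_ne (p : ℤ) (d : Bool) : movedHead p d ≠ p := by
  cases d <;> simp [movedHead]

def headStep (C : ℤ → M.Sym) (p : ℤ) (q' : M.Q) (x' : M.Γ) (d : Bool) : ℤ → M.Sym :=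
  fun j => if j = p then Sum.inl x'
    else if j = movedHead p d then Sum.inr (q', tapeLetter (C j))
    else C j

section headStep
variable {C : ℤ → M.Sym} {p : ℤ} {q' : M.Q} {x' : M.Γ} {d : Bool}

lemma headStep_self : headStep C p q' x' d p = Sum.inl x' := if_pos rfl

lemma headStep_of_eq_movedHead {j : ℤ} (h : j = movedHead p d) :
    headStep C p q' x' d j = Sum.inr (q', tapeLetter (C j)) :=
  (if_neg (h ▸ movedHead_ne p d)).trans (if_pos h)

lemma headStep_of_ne {j : ℤ} (h₁ : j ≠ p) (h₂ : j ≠ movedHead p d) :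
    headStep C p q' x' d j = C j :=
  (if_neg h₁).trans (if_neg h₂)

end headStep

lemma uniqueHead_headStep {C : ℤ → M.Sym} {p q x} (hC : UniqueHead C p q x)
    (q' : M.Q) (x' : M.Γ) (d : Bool) :
    UniqueHead (headStep C p q' x' d) (movedHead p d) q'
      (tapeLetter (C (movedHead p d))) := by
  refine ⟨headStep_of_eq_movedHead rfl, fun j hj => ?_⟩
  by_cases hjp : j = p
  · exact ⟨x', hjp ▸ headStep_self⟩
  · rw [headStep_of_ne hjp hj]
    exact hC.2 j hjp

lemma configStep_headStep {C : ℤ → M.Sym} {p q x q' x' d} (hC : UniqueHead C p q x)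
    (hq : ¬ M.isFinalState q) (hδ : M.δ q x = (q', x', d)) :
    M.ConfigStep C (headStep C p q' x' d) := by
  intro j
  rcases (show j = p ∨ j = p + 1 ∨ j = p - 1 ∨ (j - 1 ≠ p ∧ j ≠ p ∧ j + 1 ≠ p) by omega) with
    rfl | rfl | rfl | ⟨h₁, h₂, h₃⟩
  · obtain ⟨a, ha⟩ := hC.2 (j - 1) (by omega)
    obtain ⟨c, hc⟩ := hC.2 (j + 1) (by omega)
    rw [headStep_self, ha, hC.1, hc]
    exact .headMid hq hδ
  · obtain ⟨y, hy⟩ := hC.2 (p + 1) (by omega)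
    obtain ⟨z, hz⟩ := hC.2 (p + 1 + 1) (by omega)
    rw [add_sub_cancel_right, hC.1, hz]
    cases d
    · rw [headStep_of_ne (by omega) (by simp [movedHead]; omega), hy]
      exact .headLeftL hq hδ
    · rw [headStep_of_eq_movedHead (j := p + 1) rfl, hy]
      exact .headLeftR hq hδ
  · obtain ⟨y, hy⟩ := hC.2 (p - 1) (by omega)
    obtain ⟨a, ha⟩ := hC.2 (p - 1 - 1) (by omega)
    rw [sub_add_cancel, hC.1, ha]
    cases d
    · rw [headStep_of_eq_movedHead (j := p - 1) rfl, hy]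
      exact .headRightL hq hδ
    · rw [headStep_of_ne (by omega) (by simp [movedHead]; omega), hy]
      exact .headRightR hq hδ
  · obtain ⟨a, ha⟩ := hC.2 (j - 1) h₁
    obtain ⟨b, hb⟩ := hC.2 j h₂
    obtain ⟨c, hc⟩ := hC.2 (j + 1) h₃
    rw [headStep_of_ne h₂ (by cases d <;> simp [movedHead] <;> omega), ha, hb, hc]
    exact .plain

lemma exists_uniqueHead_of_compC {w : List M.Γ} {i : ℕ} {C : ℤ → M.Sym}
    (hC : M.compC w i = some C) : ∃ p q x, UniqueHead C p q x := by
  induction i generalizing C with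
  | zero => exact Option.some.inj hC ▸ ⟨_, _, _, uniqueHead_initConfig w⟩
  | succ i ih =>
    obtain ⟨C₀, hC₀, hfin, hs⟩ := compC_succ_eq_some_iff.1 hC
    obtain ⟨p, q, x, hu⟩ := ih hC₀
    have hq : ¬ M.isFinalState q := fun hq => hfin ⟨p, q, x, hu.1, hq⟩
    rcases hδ : M.δ q x with ⟨q', x', d⟩
    rw [hs.unique (configStep_headStep hu hq hδ)]
    exact ⟨_, _, _, uniqueHead_headStep hu q' x' d⟩

lemma exists_compC_succ_of_head {w : List M.Γ} {i : ℕ} {C : ℤ → M.Sym} {p q x}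
    (hC : M.compC w i = some C) (hp : C p = Sum.inr (q, x)) (hq : ¬ M.isFinalState q) :
    ∃ C', M.compC w (i + 1) = some C' := by
  obtain ⟨p₀, q₀, x₀, hu⟩ := exists_uniqueHead_of_compC hC
  obtain rfl := hu.eq_of_inr hp
  obtain ⟨rfl, rfl⟩ := Prod.mk.inj (Sum.inr.inj (hp.symm.trans hu.1))
  rcases hδ : M.δ q x with ⟨q', x', d⟩
  exact ⟨_, compC_succ_eq_some_iff.2
    ⟨C, hC, hu.not_isFinalConfig hq, configStep_headStep hu hq hδ⟩⟩

end TM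

namespace Gm
variable {M : TM} {w : List M.Γ}

lemma win_s0_iff : (Gm M w).Win GSt.s0 ↔
    ∃ x i j, (Gm M w).Win (GSt.sym (Sum.inr (M.qacc, x)) i j) := by
  constructor
  · rintro (h | ⟨-, ht, h⟩ | ⟨hne, -, -⟩)
    · simp [Gm] at h
    · cases ht with | start x i j => exact ⟨x, i, j, h⟩
    · exact absurd trivial hne
  · rintro ⟨x, i, j, h⟩
    exact .eve trivial (.start x i j) h

lemma win_sym_zero_iff {β : M.Sym} {j : ℤ} :
    (Gm M w).Win (GSt.sym β 0 j) ↔ β = M.initConfig w j := by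
  constructor
  · rintro (h | ⟨-, ht, -⟩ | ⟨hne, -, -⟩)
    · simp [Gm] at h
    · cases ht with | finish _ h => exact h
    · exact absurd trivial hne
  · intro h
    exact .eve trivial (.finish j h) (.base rfl)

lemma win_tri_iff {t : M.Sym × M.Sym × M.Sym} {i : ℕ} {j : ℤ} :
    (Gm M w).Win (GSt.tri t i j) ↔ (Gm M w).Win (GSt.sym t.1 i (j - 1)) ∧
      (Gm M w).Win (GSt.sym t.2.1 i j) ∧ (Gm M w).Win (GSt.sym t.2.2 i (j + 1)) := by
  constructor
  · rintro (h | ⟨he, -, -⟩ | ⟨-, -, h⟩)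
    · simp [Gm] at h
    · exact absurd he id
    · exact ⟨h _ .pick1, h _ .pick2, h _ .pick3⟩
  · rintro ⟨h₁, h₂, h₃⟩
    refine .adam id ⟨_, .pick2⟩ fun s hs => ?_
    cases hs <;> assumption

lemma win_sym_succ_iff {β : M.Sym} {i : ℕ} {j : ℤ} :
    (Gm M w).Win (GSt.sym β (i + 1) j) ↔ ∃ t, M.Yields t β ∧
      (Gm M w).Win (GSt.sym t.1 i (j - 1)) ∧ (Gm M w).Win (GSt.sym t.2.1 i j) ∧
      (Gm M w).Win (GSt.sym t.2.2 i (j + 1)) := by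
  constructor
  · rintro (h | ⟨-, ht, h⟩ | ⟨hne, -, -⟩)
    · simp [Gm] at h
    · cases ht with | expand _ _ hY => exact ⟨_, hY, win_tri_iff.1 h⟩
    · exact absurd trivial hne
  · rintro ⟨t, hY, h⟩
    exact .eve trivial (.expand i j hY) (win_tri_iff.2 h)

lemma win_sym_iff_of_compC {i : ℕ} {C : ℤ → M.Sym} (hC : M.compC w i = some C)
    {β : M.Sym} {j : ℤ} : (Gm M w).Win (GSt.sym β i j) ↔ C j = β := by
  induction i generalizing C β j with
  | zero => rw [win_sym_zero_iff, ← Option.some.inj hC, eq_comm]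
  | succ i ih =>
    obtain ⟨C₀, hC₀, -, hs⟩ := TM.compC_succ_eq_some_iff.1 hC
    simp only [win_sym_succ_iff, ih hC₀]
    constructor
    · rintro ⟨⟨a, b, c⟩, hY, rfl, rfl, rfl⟩
      exact (hs j).unique hY
    · rintro rfl
      exact ⟨_, hs j, rfl, rfl, rfl⟩

lemma exists_compC_of_win_head {i : ℕ} {j : ℤ} {q : M.Q} {x : M.Γ}
    (h : (Gm M w).Win (GSt.sym (Sum.inr (q, x)) i j)) :
    ∃ C, M.compC w i = some C ∧ C j = Sum.inr (q, x) := by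
  induction i generalizing j q x with
  | zero => exact ⟨_, rfl, (win_sym_zero_iff.1 h).symm⟩
  | succ i ih =>
    obtain ⟨⟨a, b, c⟩, hY, ha, -, hc⟩ := win_sym_succ_iff.1 h
    obtain ⟨k, q₀, x₀, hq₀, hk⟩ : ∃ k q₀ x₀, ¬ M.isFinalState q₀ ∧
        (Gm M w).Win (GSt.sym (Sum.inr (q₀, x₀)) i k) := by
      obtain ⟨q₀, x₀, hq₀, rfl | rfl⟩ := hY.exists_head_of_inr
      exacts [⟨_, q₀, x₀, hq₀, ha⟩, ⟨_, q₀, x₀, hq₀, hc⟩]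
    obtain ⟨C, hC, hCk⟩ := ih hk
    obtain ⟨C', hC'⟩ := TM.exists_compC_succ_of_head hC hCk hq₀
    exact ⟨C', hC', (win_sym_iff_of_compC hC').1 h⟩

end Gm

/-- in the abstract game `G^M_w`, the initial state `s₀` belongs
to Eve's winning region iff `w ∈ L(M)`. -/
theorem s0_winning_iff_accepts (M : TM) (w : List M.Γ) :
    GSt.s0 ∈ (Gm M w).WinE ↔ M.Accepts w := by
  rw [RGame.mem_winE_iff, Gm.win_s0_iff]
  constructor
  · rintro ⟨x, i, j, h⟩
    obtain ⟨C, hC, hCj⟩ := Gm.exists_compC_of_win_head h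
    exact ⟨i, C, j, x, hC, hCj⟩
  · rintro ⟨i, C, j, x, hC, hCj⟩
    exact ⟨x, i, j, (Gm.win_sym_iff_of_compC hC).2 hCj⟩
end

section
/- In the r-game associated with the one-counter net game N^M_{w,m}, for c ∈ {0, m−1}: the configuration g_c(k) is in Eve's winning region iff k mod m ≠ c, and ḡ_c(k) is in Eve's winning region iff k mod m = c. -/
/-- The reachability game associated with a one-counter net game with control
states `Q`, Eve's control states `eveS`, rules `rules q z q'`, and target
control state `pwin`: states are `(q, k)` with counter `k ∈ ℕ`, and a rule
`q →^z q'` induces `(q,k) → (q', k+z)` whenever `k + z ≥ 0`. -/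
noncomputable def ocnGame {Q : Type} (eveS : Set Q) (rules : Q → ℤ → Q → Prop)
    (pwin : Q) : RGame (Q × ℕ) where
  eve := {p | p.1 ∈ eveS}
  trans := fun p p' => ∃ z : ℤ, rules p.1 z p'.1 ∧ (p.2 : ℤ) + z = (p'.2 : ℤ)
  target := {p | p.1 = pwin}

/-- Control states of the `g_c` / `ḡ_c` gadget together with the `e_c` / `ē_c`
gadget it relies on (plus target `pwin` and dead state `pA`). -/
inductive GCSt where
  | gc : GCSt
  | gc' : GCSt
  | gbc : GCSt
  | gbc' : GCSt
  | ec : GCSt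
  | ec' : GCSt
  | ebc : GCSt
  | ebc' : GCSt
  | pwin : GCSt
  | pA : GCSt

/-- Rules: `g_c →^{-m} g_c`, `g_c →^0 g'_c`, `g'_c →^{-m} p_win`,
`g'_c →^0 e_c`, and symmetrically for `ḡ_c`, together with the `e_c`/`ē_c`
gadget rules. -/
inductive GCRule (m c : ℕ) : GCSt → ℤ → GCSt → Prop
  | g1 : GCRule m c GCSt.gc (-(m : ℤ)) GCSt.gc
  | g2 : GCRule m c GCSt.gc 0 GCSt.gc'
  | g3 : GCRule m c GCSt.gc' (-(m : ℤ)) GCSt.pwin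
  | g4 : GCRule m c GCSt.gc' 0 GCSt.ec
  | g5 : GCRule m c GCSt.gbc (-(m : ℤ)) GCSt.gbc
  | g6 : GCRule m c GCSt.gbc 0 GCSt.gbc'
  | g7 : GCRule m c GCSt.gbc' (-(m : ℤ)) GCSt.pwin
  | g8 : GCRule m c GCSt.gbc' 0 GCSt.ebc
  | r1 : GCRule m c GCSt.ec (-(c : ℤ)) GCSt.ec'
  | r2 : GCRule m c GCSt.ec 0 GCSt.pwin
  | r3 : GCRule m c GCSt.ec' (-1) GCSt.pwin
  | r4 : GCRule m c GCSt.ebc (-(c : ℤ)) GCSt.ebc'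
  | r5 : GCRule m c GCSt.ebc' (-1) GCSt.pA
  | r6 : GCRule m c GCSt.ebc' 0 GCSt.pwin

/-- Eve's control states: `g'_c`, `ḡ'_c`, `e'_c`, `ē_c`, `p_win`, `p_A`;
Adam's: `g_c`, `ḡ_c`, `e_c`, `ē'_c`. -/
def GCEve : Set GCSt :=
  {GCSt.gc', GCSt.gbc', GCSt.ec', GCSt.ebc, GCSt.pwin, GCSt.pA}

/-! Eve's winning region is the least set that contains the target and is closed under the attractor
step: an Eve state with a winning successor, or an Adam state with only winning successors. It
therefore suffices to guess the winning configurations of every control state, check that the guess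
is closed under this step (so it contains the winning region), and win each guessed configuration
explicitly (by induction on the counter for the loops at `g_c` and `ḡ_c`).

In `g_c(k)` Adam may subtract `m` as often as he likes before handing `g'_c(k)` to Eve, who wins
by paying `m` if she can and otherwise only through `e_c(k)`, i.e. iff `k ≠ c`; so Adam's best
choice is to stop at `k mod m`. Dually, in `ḡ_c(k)` Eve wins iff `k mod m = c`. -/

namespace RGame

variable {V : Type} {g : RGame V}

variable (g) in
def below (o : Ordinal.{0}) : Set V := ⋃ o' : {x : Ordinal.{0} // x < o}, g.W o'.1

lemma W_zero : g.W 0 = g.target := by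
  rw [W]; simp

lemma W_of_ne_zero {o : Ordinal.{0}} (ho : o ≠ 0) :
    g.W o = {s | s ∉ g.below o ∧
      ((s ∈ g.eve ∧ ∃ t, g.trans s t ∧ t ∈ g.below o) ∨
       (s ∉ g.eve ∧ (∃ t, g.trans s t) ∧ ∀ t, g.trans s t → t ∈ g.below o))} := by
  rw [W, if_neg ho]; rfl

lemma mem_winE_of_mem_W {o : Ordinal.{0}} {s : V} (h : s ∈ g.W o) : s ∈ g.WinE :=
  Set.mem_iUnion.2 ⟨o, h⟩

lemma target_subset_winE : g.target ⊆ g.WinE := fun _ hs =>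
  mem_winE_of_mem_W (o := 0) (W_zero ▸ hs)

lemma below_subset_winE (o : Ordinal.{0}) : g.below o ⊆ g.WinE := fun _ hs =>
  let ⟨_, h⟩ := Set.mem_iUnion.1 hs
  mem_winE_of_mem_W h

lemma mem_winE_of_attracted {o : Ordinal.{0}} {s : V} (ho : o ≠ 0)
    (h : (s ∈ g.eve ∧ ∃ t, g.trans s t ∧ t ∈ g.below o) ∨
      (s ∉ g.eve ∧ (∃ t, g.trans s t) ∧ ∀ t, g.trans s t → t ∈ g.below o)) :
    s ∈ g.WinE := by
  by_cases hs : s ∈ g.below o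
  · exact below_subset_winE o hs
  · exact mem_winE_of_mem_W (o := o) (by rw [W_of_ne_zero ho]; exact ⟨hs, h⟩)

lemma mem_winE_of_eve {s t : V} (hs : s ∈ g.eve) (ht : g.trans s t) (h : t ∈ g.WinE) :
    s ∈ g.WinE := by
  obtain ⟨o, ho⟩ := Set.mem_iUnion.1 h
  exact mem_winE_of_attracted (ne_zero_of_lt (lt_add_one o))
    (Or.inl ⟨hs, t, ht, Set.mem_iUnion.2 ⟨⟨o, lt_add_one o⟩, ho⟩⟩)

lemma mem_winE_of_adam {s : V} (hs : s ∉ g.eve) (hmove : ∃ t, g.trans s t)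
    (h : ∀ t, g.trans s t → t ∈ g.WinE) : s ∈ g.WinE := by
  choose f hf using fun t : {t // g.trans s t} => Set.mem_iUnion.1 (h t.1 t.2)
  have hbelow : ∀ t, g.trans s t → t ∈ g.below (⨆ t, f t + 1) := fun t ht =>
    Set.mem_iUnion.2 ⟨⟨_, Ordinal.lt_iSup_add_one f ⟨t, ht⟩⟩, hf ⟨t, ht⟩⟩
  obtain ⟨t, ht⟩ := hmove
  exact mem_winE_of_attracted
    (ne_zero_of_lt (Ordinal.lt_iSup_add_one f ⟨t, ht⟩))
    (Or.inr ⟨hs, ⟨t, ht⟩, hbelow⟩)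

theorem winE_subset {S : Set V} (htarget : g.target ⊆ S)
    (heve : ∀ s ∈ g.eve, ∀ t, g.trans s t → t ∈ S → s ∈ S)
    (hadam : ∀ s ∉ g.eve, (∃ t, g.trans s t) → (∀ t, g.trans s t → t ∈ S) → s ∈ S) :
    g.WinE ⊆ S := by
  refine Set.iUnion_subset fun o => ?_
  induction o using WellFoundedLT.induction with
  | _ o ih =>
    rcases eq_or_ne o 0 with rfl | ho
    · rw [W_zero]; exact htarget
    have hbelow : g.below o ⊆ S := fun t ht => by
      obtain ⟨⟨o', ho'⟩, ht⟩ := Set.mem_iUnion.1 ht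
      exact ih o' ho' ht
    rw [W_of_ne_zero ho]
    rintro s ⟨-, ⟨hs, t, ht, htb⟩ | ⟨hs, hmove, hall⟩⟩
    · exact heve s hs t ht (hbelow htb)
    · exact hadam s hs hmove fun t ht => hbelow (hall t ht)

end RGame

namespace ocnGame

variable {Q : Type} {E : Set Q} {r : Q → ℤ → Q → Prop} {pwin : Q}

lemma mem_winE_of_eve {q q' : Q} {z : ℤ} {k k' : ℕ} (hq : q ∈ E) (hr : r q z q')
    (hk : (k : ℤ) + z = k') (h : (q', k') ∈ (ocnGame E r pwin).WinE) :
    (q, k) ∈ (ocnGame E r pwin).WinE :=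
  RGame.mem_winE_of_eve hq ⟨z, hr, hk⟩ h

lemma mem_winE_of_adam {q : Q} {k : ℕ} (hq : q ∉ E)
    (hmove : ∃ z q', ∃ k' : ℕ, r q z q' ∧ (k : ℤ) + z = k')
    (h : ∀ z q' (k' : ℕ), r q z q' → (k : ℤ) + z = k' → (q', k') ∈ (ocnGame E r pwin).WinE) :
    (q, k) ∈ (ocnGame E r pwin).WinE := by
  obtain ⟨z, q', k', hr, hk⟩ := hmove
  exact RGame.mem_winE_of_adam hq ⟨(q', k'), z, hr, hk⟩ fun ⟨q', k'⟩ ⟨z, hr, hk⟩ => h z q' k' hr hk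

theorem winE_subset {S : Q → ℕ → Prop} (htarget : ∀ k, S pwin k)
    (heve : ∀ q ∈ E, ∀ z q' (k k' : ℕ), r q z q' → (k : ℤ) + z = k' → S q' k' → S q k)
    (hadam : ∀ q ∉ E, ∀ k : ℕ,
      (∀ z q' (k' : ℕ), r q z q' → (k : ℤ) + z = k' → S q' k') → S q k)
    {q : Q} {k : ℕ} (h : (q, k) ∈ (ocnGame E r pwin).WinE) : S q k := by
  refine RGame.winE_subset (S := {p | S p.1 p.2}) ?_ ?_ ?_ h
  · rintro ⟨q, k⟩ rfl
    exact htarget k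
  · rintro ⟨q, k⟩ hq ⟨q', k'⟩ ⟨z, hr, hk⟩ hS
    exact heve q hq z q' k k' hr hk hS
  · rintro ⟨q, k⟩ hq - hall
    exact hadam q hq k fun z q' k' hr hk => hall (q', k') ⟨z, hr, hk⟩

end ocnGame

namespace GCSt

variable {m c : ℕ}

local notation "G" => ocnGame GCEve (GCRule m c) GCSt.pwin

def Winning (m c : ℕ) : GCSt → ℕ → Prop
  | .gc, k => k % m ≠ c
  | .gc', k => m ≤ k ∨ k ≠ c
  | .gbc, k => k % m = c
  | .gbc', k => m ≤ k ∨ k = c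
  | .ec, k => k ≠ c
  | .ec', k => 1 ≤ k
  | .ebc, k => k = c
  | .ebc', k => k = 0
  | .pwin, _ => True
  | .pA, _ => False

theorem winning_of_mem_winE {q : GCSt} {k : ℕ} (h : (q, k) ∈ (G).WinE) : Winning m c q k := by
  refine ocnGame.winE_subset (fun _ => trivial) ?_ ?_ h
  · intro q hq z q' k k' hr hk hw
    cases hr <;> simp only [Winning] at hw ⊢ <;> first | omega | simp [GCEve] at hq
  · intro q hq k hall
    cases q
    case ec =>
      rintro rfl
      exact Nat.not_succ_le_zero 0 (hall _ ec' 0 .r1 (by simp))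
    case ebc' =>
      show k = 0
      by_contra hk
      exact hall (-1) pA (k - 1) .r5 (by omega)
    case gc =>
      show k % m ≠ c
      rcases le_or_gt m k with hmk | hkm
      · rw [Nat.mod_eq_sub_mod hmk]; exact hall _ gc (k - m) .g1 (by omega)
      · rw [Nat.mod_eq_of_lt hkm]
        exact (hall 0 gc' k .g2 (by simp)).resolve_left (by omega)
    case gbc =>
      show k % m = c
      rcases le_or_gt m k with hmk | hkm
      · rw [Nat.mod_eq_sub_mod hmk]; exact hall _ gbc (k - m) .g5 (by omega)
      · rw [Nat.mod_eq_of_lt hkm]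
        exact (hall 0 gbc' k .g6 (by simp)).resolve_left (by omega)
    all_goals exact absurd (by simp [GCEve]) hq

lemma pwin_mem_winE (k : ℕ) : (pwin, k) ∈ (G).WinE :=
  RGame.target_subset_winE rfl

lemma ec'_mem_winE {k : ℕ} (hk : 1 ≤ k) : (ec', k) ∈ (G).WinE :=
  ocnGame.mem_winE_of_eve (k' := k - 1) (by simp [GCEve]) .r3 (by omega) (pwin_mem_winE _)

lemma ebc'_mem_winE : (ebc', 0) ∈ (G).WinE := by
  refine ocnGame.mem_winE_of_adam (by simp [GCEve]) ⟨0, pwin, 0, .r6, rfl⟩ ?_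
  intro z q' k' hr hk
  cases hr with
  | r5 => omega
  | r6 => exact pwin_mem_winE _

lemma ec_mem_winE {k : ℕ} (hk : k ≠ c) : (ec, k) ∈ (G).WinE := by
  refine ocnGame.mem_winE_of_adam (by simp [GCEve]) ⟨0, pwin, k, .r2, by simp⟩ ?_
  intro z q' k' hr hk'
  cases hr with
  | r1 => exact ec'_mem_winE (by omega)
  | r2 => exact pwin_mem_winE _

lemma ebc_mem_winE : (ebc, c) ∈ (G).WinE :=
  ocnGame.mem_winE_of_eve (by simp [GCEve]) .r4 (by simp) ebc'_mem_winE

lemma gc'_mem_winE {k : ℕ} (hk : m ≤ k ∨ k ≠ c) : (gc', k) ∈ (G).WinE := by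
  rcases hk with hmk | hkc
  · exact ocnGame.mem_winE_of_eve (k' := k - m) (by simp [GCEve]) .g3 (by omega) (pwin_mem_winE _)
  · exact ocnGame.mem_winE_of_eve (by simp [GCEve]) .g4 (by simp) (ec_mem_winE hkc)

lemma gbc'_mem_winE {k : ℕ} (hk : m ≤ k ∨ k = c) : (gbc', k) ∈ (G).WinE := by
  rcases hk with hmk | rfl
  · exact ocnGame.mem_winE_of_eve (k' := k - m) (by simp [GCEve]) .g7 (by omega) (pwin_mem_winE _)
  · exact ocnGame.mem_winE_of_eve (by simp [GCEve]) .g8 (by simp) ebc_mem_winE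

lemma gc_mem_winE (hm : 0 < m) {k : ℕ} (hk : k % m ≠ c) : (gc, k) ∈ (G).WinE := by
  induction k using Nat.strong_induction_on with
  | _ k ih =>
    refine ocnGame.mem_winE_of_adam (by simp [GCEve]) ⟨0, gc', k, .g2, by simp⟩ ?_
    intro z q' k' hr hk'
    cases hr with
    | g1 =>
      have hmk : m ≤ k := by omega
      obtain rfl : k' = k - m := by omega
      exact ih _ (by omega) (by rwa [← Nat.mod_eq_sub_mod hmk])
    | g2 =>
      obtain rfl : k' = k := by omega
      exact gc'_mem_winE ((le_or_gt m k').imp_right fun hkm => by rwa [Nat.mod_eq_of_lt hkm] at hk)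

lemma gbc_mem_winE (hm : 0 < m) {k : ℕ} (hk : k % m = c) : (gbc, k) ∈ (G).WinE := by
  induction k using Nat.strong_induction_on with
  | _ k ih =>
    refine ocnGame.mem_winE_of_adam (by simp [GCEve]) ⟨0, gbc', k, .g6, by simp⟩ ?_
    intro z q' k' hr hk'
    cases hr with
    | g5 =>
      have hmk : m ≤ k := by omega
      obtain rfl : k' = k - m := by omega
      exact ih _ (by omega) (by rwa [← Nat.mod_eq_sub_mod hmk])
    | g6 =>
      obtain rfl : k' = k := by omega
      exact gbc'_mem_winE ((le_or_gt m k').imp_right fun hkm => by rwa [Nat.mod_eq_of_lt hkm] at hk)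

theorem mem_winE_of_winning (hm : 0 < m) :
    ∀ {q : GCSt} {k : ℕ}, Winning m c q k → (q, k) ∈ (G).WinE
  | .gc, _, h => gc_mem_winE hm h
  | .gc', _, h => gc'_mem_winE h
  | .gbc, _, h => gbc_mem_winE hm h
  | .gbc', _, h => gbc'_mem_winE h
  | .ec, _, h => ec_mem_winE h
  | .ec', _, h => ec'_mem_winE h
  | .ebc, _, h => h ▸ ebc_mem_winE
  | .ebc', _, h => h ▸ ebc'_mem_winE
  | .pwin, _, _ => pwin_mem_winE _
  | .pA, _, h => h.elim

theorem mem_winE_iff (hm : 0 < m) {q : GCSt} {k : ℕ} :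
    (q, k) ∈ (G).WinE ↔ Winning m c q k :=
  ⟨winning_of_mem_winE, mem_winE_of_winning hm⟩

end GCSt

theorem g_gadget_winning_general (m c : ℕ) (hm : 2 ≤ m) (k : ℕ) :
    ((GCSt.gc, k) ∈ (ocnGame GCEve (GCRule m c) GCSt.pwin).WinE ↔ k % m ≠ c) ∧
    ((GCSt.gbc, k) ∈ (ocnGame GCEve (GCRule m c) GCSt.pwin).WinE ↔ k % m = c) :=
  ⟨GCSt.mem_winE_iff (by omega), GCSt.mem_winE_iff (by omega)⟩

/-- for `c ∈ {0, m-1}`, `g_c(k)` is winning for Eve iff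
`k mod m ≠ c`, and `ḡ_c(k)` is winning for Eve iff `k mod m = c`. -/
theorem g_gadget_winning (m c : ℕ) (hm : 2 ≤ m) (hc : c = 0 ∨ c = m - 1) (k : ℕ) :
    ((GCSt.gc, k) ∈ (ocnGame GCEve (GCRule m c) GCSt.pwin).WinE ↔ k % m ≠ c) ∧
    ((GCSt.gbc, k) ∈ (ocnGame GCEve (GCRule m c) GCSt.pwin).WinE ↔ k % m = c) :=
  g_gadget_winning_general m c hm k
end

section
/- In the r-game associated with N^M_{w,m}, the configuration f(k) is in Eve's winning region iff n ≤ k < m, where n = |w| ≤ m. -/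
/-- Control states of the `f` gadget. -/
inductive FSt where
  | f : FSt
  | f' : FSt
  | pwin : FSt
  | pA : FSt

/-- Rules: `f →^{-m} p_A`, `f →^0 f'` (Adam's `f`), `f' →^{-n} p_win` (Eve's `f'`). -/
inductive FRule (m n : ℕ) : FSt → ℤ → FSt → Prop
  | r1 : FRule m n FSt.f (-(m : ℤ)) FSt.pA
  | r2 : FRule m n FSt.f 0 FSt.f'
  | r3 : FRule m n FSt.f' (-(n : ℤ)) FSt.pwin

/-- Eve's control states: `f'`, `p_win`, `p_A`; Adam's: `f`. -/
def FEve : Set FSt := {FSt.f', FSt.pwin, FSt.pA}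

lemma fEve_f' : FSt.f' ∈ FEve := Or.inl rfl
lemma fEve_f : FSt.f ∉ FEve := by intro h; rcases h with h | h | h <;> exact FSt.noConfusion h
lemma fEve_pA : FSt.pA ∈ FEve := by right; right; rfl

lemma lt_two_cases (o : Ordinal) (h : o < 2) : o = 0 ∨ o = 1 := by
  have h1 : o ≤ 1 := Order.lt_succ_iff.mp (by rwa [Ordinal.succ_one])
  rcases eq_or_lt_of_le h1 with h2 | h2
  · right; exact h2
  · left; exact Ordinal.lt_one_iff_zero.mp h2

/-- Invariant: any state in any attractor stage is pwin, or f' with k ≥ n, or f with n ≤ k < m. -/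
lemma f_gadget_inv (m n : ℕ) : ∀ o : Ordinal, ∀ s : FSt × ℕ,
    s ∈ (ocnGame FEve (FRule m n) FSt.pwin).W o →
    s.1 = FSt.pwin ∨ (s.1 = FSt.f' ∧ n ≤ s.2) ∨ (s.1 = FSt.f ∧ n ≤ s.2 ∧ s.2 < m) := by
  intro o
  induction o using Ordinal.induction with
  | h o IH =>
  intro s hs
  by_cases h0 : o = 0
  · subst h0
    rw [RGame.W, if_pos rfl] at hs
    left; exact hs
  · rw [RGame.W, if_neg h0] at hs
    obtain ⟨hnot, hcase⟩ := hs
    obtain ⟨q, j⟩ := s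
    cases q with
    | pwin => left; rfl
    | pA =>
      rcases hcase with ⟨_, ⟨t, ht, _⟩⟩ | ⟨hne, _⟩
      · obtain ⟨z, hr, _⟩ := ht
        cases hr
      · exact absurd fEve_pA hne
    | f' =>
      right; left; refine ⟨rfl, ?_⟩
      rcases hcase with ⟨_, ⟨t, ht, _⟩⟩ | ⟨hne, _⟩
      · obtain ⟨t1, t2⟩ := t
        obtain ⟨z, hr, hz⟩ := ht
        cases hr
        simp only at hz
        omega
      · exact absurd fEve_f' hne
    | f =>
      rcases hcase with ⟨he, _⟩ | ⟨_, _, hall⟩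
      · exact absurd he fEve_f
      · have hjm : j < m := by
          by_contra hjm
          push_neg at hjm
          have htr : (ocnGame FEve (FRule m n) FSt.pwin).trans (FSt.f, j) (FSt.pA, j - m) :=
            ⟨-(m : ℤ), FRule.r1, by push_cast; omega⟩
          have := hall _ htr
          rw [Set.mem_iUnion] at this
          obtain ⟨⟨o', ho'⟩, hmem⟩ := this
          rcases IH o' ho' _ hmem with h | ⟨h, _⟩ | ⟨h, _⟩ <;> exact FSt.noConfusion h
        have htr : (ocnGame FEve (FRule m n) FSt.pwin).trans (FSt.f, j) (FSt.f', j) :=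
          ⟨0, FRule.r2, by omega⟩
        have := hall _ htr
        rw [Set.mem_iUnion] at this
        obtain ⟨⟨o', ho'⟩, hmem⟩ := this
        rcases IH o' ho' _ hmem with h | ⟨_, h⟩ | ⟨h, _⟩
        · exact FSt.noConfusion h
        · exact Or.inr (Or.inr ⟨rfl, h, hjm⟩)
        · exact FSt.noConfusion h

lemma f'_W1 (m n : ℕ) (k : ℕ) (hk : n ≤ k) :
    (FSt.f', k) ∈ (ocnGame FEve (FRule m n) FSt.pwin).W 1 := by
  rw [RGame.W, if_neg one_ne_zero]
  refine ⟨?_, Or.inl ⟨fEve_f', ⟨(FSt.pwin, k - n), ⟨-(n : ℤ), FRule.r3, by push_cast; omega⟩, ?_⟩⟩⟩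
  · intro h
    rw [Set.mem_iUnion] at h
    obtain ⟨⟨o', ho'⟩, hmem⟩ := h
    have : o' = 0 := Ordinal.lt_one_iff_zero.mp ho'
    subst this
    rw [RGame.W, if_pos rfl] at hmem
    exact FSt.noConfusion hmem
  · rw [Set.mem_iUnion]
    exact ⟨⟨0, zero_lt_one⟩, by rw [RGame.W, if_pos rfl]; exact rfl⟩

lemma f_W2 (m n : ℕ) (k : ℕ) (hk : n ≤ k) (hkm : k < m) :
    (FSt.f, k) ∈ (ocnGame FEve (FRule m n) FSt.pwin).W 2 := by
  rw [RGame.W, if_neg two_ne_zero]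
  refine ⟨?_, Or.inr ⟨fEve_f, ⟨(FSt.f', k), ⟨0, FRule.r2, by omega⟩⟩, ?_⟩⟩
  · intro h
    rw [Set.mem_iUnion] at h
    obtain ⟨⟨o', ho'⟩, hmem⟩ := h
    rcases lt_two_cases o' ho' with h1 | h1 <;> subst h1
    · rw [RGame.W, if_pos rfl] at hmem
      exact FSt.noConfusion hmem
    · rw [RGame.W, if_neg one_ne_zero] at hmem
      obtain ⟨_, hcase⟩ := hmem
      rcases hcase with ⟨he, _⟩ | ⟨_, _, hall⟩
      · exact fEve_f he
      · have := hall (FSt.f', k) ⟨0, FRule.r2, by omega⟩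
        rw [Set.mem_iUnion] at this
        obtain ⟨⟨o'', ho''⟩, hmem'⟩ := this
        have : o'' = 0 := Ordinal.lt_one_iff_zero.mp ho''
        subst this
        rw [RGame.W, if_pos rfl] at hmem'
        exact FSt.noConfusion hmem'
  · rintro ⟨q, j⟩ ⟨z, hr, hz⟩
    cases hr
    · exfalso
      simp only at hz
      omega
    · have hj : j = k := by simp only at hz; omega
      subst hj
      rw [Set.mem_iUnion]
      exact ⟨⟨1, one_lt_two⟩, f'_W1 m n j hk⟩

/-- `f(k)` is winning for Eve iff `n ≤ k < m`, where `1 ≤ n ≤ m`. -/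
theorem f_gadget_winning (m n : ℕ) (hn : 1 ≤ n) (hnm : n ≤ m) (k : ℕ) :
    (FSt.f, k) ∈ (ocnGame FEve (FRule m n) FSt.pwin).WinE ↔ (n ≤ k ∧ k < m) := by
  constructor
  · intro h
    rw [RGame.WinE, Set.mem_iUnion] at h
    obtain ⟨o, hmem⟩ := h
    rcases f_gadget_inv m n o _ hmem with h | ⟨h, _⟩ | ⟨_, h⟩
    · exact FSt.noConfusion h
    · exact FSt.noConfusion h
    · exact h
  · rintro ⟨h1, h2⟩
    rw [RGame.WinE, Set.mem_iUnion]
    exact ⟨2, f_W2 m n k h1 h2⟩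
end

section
/- Given a reachability game G and its associated defender-choice LTS L(G): for every state s of G, if s is in Eve's winning region of G, then s does not simulate-below its primed copy s' in L(G) (s ⋢ s'). -/
/-- A labelled transition system with states `S` and actions `A`. -/
structure LTS (S : Type) (A : Type) where
  tr : A → S → S → Prop

/-- `R` is a simulation: every transition from `s` is matched from `s'`. -/
def LTS.IsSimulation {S A : Type} (L : LTS S A) (R : S → S → Prop) : Prop :=
  ∀ s s', R s s' → ∀ a t, L.tr a s t → ∃ t', L.tr a s' t' ∧ R t t'

/-- `R` is a bisimulation: mutual transfer conditions. -/
def LTS.IsBisimulation {S A : Type} (L : LTS S A) (R : S → S → Prop) : Prop :=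
  ∀ s s', R s s' →
    (∀ a t, L.tr a s t → ∃ t', L.tr a s' t' ∧ R t t') ∧
    (∀ a t', L.tr a s' t' → ∃ t, L.tr a s t ∧ R t t')

/-- Simulation preorder: the union of all simulations. -/
def LTS.Sim {S A : Type} (L : LTS S A) (s s' : S) : Prop :=
  ∃ R, L.IsSimulation R ∧ R s s'

/-- Bisimilarity: the union of all bisimulations. -/
def LTS.Bisim {S A : Type} (L : LTS S A) (s s' : S) : Prop :=
  ∃ R, L.IsBisimulation R ∧ R s s'
/-- States of the defender-choice LTS `L(G)`: original states, primed copies,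
and the auxiliary states `⟨s,X⟩` (X = successor set of s) and `⟨s,t⟩`. -/
inductive DState (V : Type) where
  | base (s : V) : DState V
  | prime (s : V) : DState V
  | all (s : V) : DState V
  | pick (s t : V) : DState V

/-- Actions of `L(G)`: one action per game transition, the choice action, and `a_win`. -/
inductive DAct (V : Type) where
  | move (s t : V) : DAct V
  | choice : DAct V
  | win : DAct V

/-- Labelled transitions of the defender-choice LTS `L(G)`. -/
inductive DTrans {V : Type} (g : RGame V) : DAct V → DState V → DState V → Prop
  | eveBase {s t} (hs : s ∈ g.eve) (h : g.trans s t) :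
      DTrans g (DAct.move s t) (DState.base s) (DState.base t)
  | evePrime {s t} (hs : s ∈ g.eve) (h : g.trans s t) :
      DTrans g (DAct.move s t) (DState.prime s) (DState.prime t)
  | choiceAll {s} (hs : s ∉ g.eve) (h : ∃ t, g.trans s t) :
      DTrans g DAct.choice (DState.base s) (DState.all s)
  | choicePickB {s t} (hs : s ∉ g.eve) (h : g.trans s t) :
      DTrans g DAct.choice (DState.base s) (DState.pick s t)
  | choicePickP {s t} (hs : s ∉ g.eve) (h : g.trans s t) :
      DTrans g DAct.choice (DState.prime s) (DState.pick s t)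
  | allMove {s t} (hs : s ∉ g.eve) (h : g.trans s t) :
      DTrans g (DAct.move s t) (DState.all s) (DState.base t)
  | pickSame {s t} (hs : s ∉ g.eve) (h : g.trans s t) :
      DTrans g (DAct.move s t) (DState.pick s t) (DState.prime t)
  | pickOther {s t u} (hs : s ∉ g.eve) (ht : g.trans s t) (hu : g.trans s u) (hne : u ≠ t) :
      DTrans g (DAct.move s u) (DState.pick s t) (DState.base u)
  | winLoop {s} (h : s ∈ g.target) :
      DTrans g DAct.win (DState.base s) (DState.base s)

/-- The defender-choice LTS associated with a reachability game. -/
def DLTS {V : Type} (g : RGame V) : LTS (DState V) (DAct V) := ⟨fun a p q => DTrans g a p q⟩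

lemma key_not_sim {V : Type} (g : RGame V) (R : DState V → DState V → Prop)
    (hR : (DLTS g).IsSimulation R) :
    ∀ o : Ordinal.{0}, ∀ s ∈ g.W o, ¬ R (DState.base s) (DState.prime s) := by
  intro o
  induction o using Ordinal.induction with
  | _ o ih =>
    intro s hs hRs
    by_cases h0 : o = 0
    · subst h0
      rw [RGame.W] at hs
      simp only [if_pos rfl] at hs
      obtain ⟨t', htr', _⟩ := hR _ _ hRs DAct.win _ (DTrans.winLoop hs)
      cases htr'
    · rw [RGame.W, if_neg h0] at hs
      obtain ⟨hnot, hcase⟩ := hs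
      rcases hcase with ⟨heve, t, htr, ht⟩ | ⟨hadam, ⟨t0, ht0⟩, hall⟩
      · obtain ⟨t', htr', hRt⟩ := hR _ _ hRs _ _ (DTrans.eveBase heve htr)
        cases htr' with
        | evePrime _ _ =>
          obtain ⟨Wo, ⟨o', rfl⟩, ho'⟩ := ht
          exact ih o'.1 o'.2 t ho' hRt
      · obtain ⟨t', htr', hRt⟩ := hR _ _ hRs DAct.choice _
          (DTrans.choiceAll hadam ⟨t0, ht0⟩)
        cases htr' with
        | choicePickP hs' hu =>
          rename_i u
          obtain ⟨t'', htr'', hRt'⟩ := hR _ _ hRt _ _ (DTrans.allMove hadam hu)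
          cases htr'' with
          | pickSame _ _ =>
            have hu' := hall u hu
            obtain ⟨Wo, ⟨o', rfl⟩, ho'⟩ := hu'
            exact ih o'.1 o'.2 u ho' hRt'
          | pickOther _ _ _ hne => exact absurd rfl hne

/-- in a finitely branching reachability game, if `s` is in
Eve's winning region, then in the defender-choice LTS `L(G)` the state `s`
is not simulated by its primed copy `s'`. -/
theorem winning_not_simulated {V : Type} (g : RGame V)
    (hfin : ∀ s : V, {t | g.trans s t}.Finite) (s : V) (hs : s ∈ g.WinE) :
    ¬ (DLTS g).Sim (DState.base s) (DState.prime s) := by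
  rintro ⟨R, hR, hRs⟩
  obtain ⟨Wo, ⟨o, rfl⟩, ho⟩ := hs
  exact key_not_sim g R hR o s ho hRs
end
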